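/- Let x, y, z > 0. Then (s/2) − (5/12)·((x+y+z)²/(3xyz)) + (1/16)·(32(x²+y²+z²−xy−yz−xz)/(9xyz)) = 0, where s = −(x²+y²−6yz+z²−6x(y+z))/(6xyz). That is, the first Hermitian scalar curvature s₁ of the non-integrable almost Hermitian structure on SU(3)/T² vanishes identically. -/
import Mathlib

theorem stmt4 (x y z : ℝ) (hx : 0 < x) (hy : 0 < y) (hz : 0 < z)
    (s : ℝ) (hs : s = -(x^2 + y^2 - 6*y*z + z^2 - 6*x*(y+z)) / (6*x*y*z)) :
    s / 2 - (5/12) * ((x + y + z)^2 / (3*x*y*z))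
      + (1/16) * (32 * (x^2 + y^2 + z^2 - x*y - y*z - x*z) / (9*x*y*z)) = 0 := by
  subst hs
  field_simp
  ring
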